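/- Let y₁,…,y₈ be real numbers satisfying y₁y₈ − y₂y₇ = 1 and y₃y₆ − y₄y₅ = 1 (i.e. the pair of 2×2 matrices [[y₁,y₂],[y₇,y₈]] and [[y₃,y₄],[y₅,y₆]] both lie in SL(2,ℝ)). Then the 4×4 real matrix D = Φ₂₂(y₁,…,y₈) satisfies Dᵀ · I_{2,2} · D = I_{2,2} and det D = 1. -/
import Mathlib


open Matrix

/-- The covering map `Φ₂₂ : SL(2,ℝ) × SL(2,ℝ) → SO⁺(2,2)`, written out entrywise. -/
noncomputable def Phi22 (y₁ y₂ y₃ y₄ y₅ y₆ y₇ y₈ : ℝ) : Matrix (Fin 4) (Fin 4) ℝ :=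
  !![(y₂*y₅ + y₁*y₆ + y₄*y₇ + y₃*y₈)/2, (y₂*y₆ - y₁*y₅ - y₃*y₇ + y₄*y₈)/2,
       (y₁*y₆ - y₂*y₅ + y₄*y₇ - y₃*y₈)/2, -(y₁*y₅ + y₂*y₆ + y₃*y₇ + y₄*y₈)/2;
     (y₆*y₇ + y₅*y₈ - y₂*y₃ - y₁*y₄)/2, (y₁*y₃ - y₂*y₄ - y₅*y₇ + y₆*y₈)/2,
       (y₂*y₃ - y₁*y₄ + y₆*y₇ - y₅*y₈)/2, (y₁*y₃ + y₂*y₄ - y₅*y₇ - y₆*y₈)/2;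
     (y₂*y₅ + y₁*y₆ - y₄*y₇ - y₃*y₈)/2, (y₂*y₆ - y₁*y₅ + y₃*y₇ - y₄*y₈)/2,
       (y₁*y₆ - y₂*y₅ - y₄*y₇ + y₃*y₈)/2, (y₃*y₇ + y₄*y₈ - y₁*y₅ - y₂*y₆)/2;
     -(y₂*y₃ + y₁*y₄ + y₆*y₇ + y₅*y₈)/2, (y₁*y₃ - y₂*y₄ + y₅*y₇ - y₆*y₈)/2,
       (y₂*y₃ - y₁*y₄ - y₆*y₇ + y₅*y₈)/2, (y₁*y₃ + y₂*y₄ + y₅*y₇ + y₆*y₈)/2]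

/-- The indefinite form matrix `I_{2,2} = diag(1,1,−1,−1)`. -/
def I22 : Matrix (Fin 4) (Fin 4) ℝ := Matrix.diagonal ![1, 1, -1, -1]

set_option maxHeartbeats 4000000 in
theorem stmt_11 (y₁ y₂ y₃ y₄ y₅ y₆ y₇ y₈ : ℝ)
    (h₁ : y₁*y₈ - y₂*y₇ = 1) (h₂ : y₃*y₆ - y₄*y₅ = 1) :
    (Phi22 y₁ y₂ y₃ y₄ y₅ y₆ y₇ y₈)ᵀ * I22 * Phi22 y₁ y₂ y₃ y₄ y₅ y₆ y₇ y₈ = I22 ∧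
    (Phi22 y₁ y₂ y₃ y₄ y₅ y₆ y₇ y₈).det = 1 := by
  constructor
  · ext i j
    fin_cases i <;> fin_cases j <;>
      simp [Phi22, I22, Matrix.mul_apply, Fin.sum_univ_four, Matrix.diagonal, Matrix.vecHead, Matrix.vecTail,
        Matrix.transpose_apply] <;>
      first
        | ring1
        | linear_combination (y₃*y₆ - y₄*y₅) * h₁ + h₂
        | linear_combination (-(y₃*y₆ - y₄*y₅)) * h₁ - h₂
  · rw [Phi22]
    simp only [Matrix.det_succ_row_zero, Fin.sum_univ_succ, Fin.sum_univ_zero,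
      Matrix.submatrix_apply, Matrix.det_fin_one, Matrix.cons_val', Matrix.cons_val_zero,
      Matrix.cons_val_one, Matrix.head_cons, Matrix.empty_val', Matrix.cons_val_fin_one,
      Matrix.head_fin_const, Fin.succ_zero_eq_one, Fin.succAbove, Matrix.of_apply,
      Matrix.cons_val_succ, Matrix.vecHead, Matrix.vecTail, Fin.val_zero,
      Fin.val_succ, Function.comp]
    norm_num [Fin.lt_def, Fin.succ]
    linear_combination ((y₃*y₆-y₄*y₅)*((y₁*y₈-y₂*y₇)*(y₃*y₆-y₄*y₅)+1)) * h₁ +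
      ((y₁*y₈-y₂*y₇)*(y₃*y₆-y₄*y₅)+1) * h₂
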